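/- arXiv:1506.03006 — 4 statements merged into one kernel-verified Lean document; each statement's English description precedes it below -/
import Mathlib

section
/- Let (X,d) be a metric space equipped with a Borel measure μ, and let a group G act on X by isometries each of which preserves μ. Let q₀ ∈ X and ε > 0 be such that d(γ•q₀, q₀) > 2ε for every γ ≠ e. Then for every finite subset F ⊆ G and every R ≥ 0 such that d(γ•q₀, q₀) ≤ R for all γ ∈ F, one has (card F) · μ(B̄(q₀, ε)) ≤ μ(B̄(q₀, R + ε)). -/
open MeasureTheory

/-- Packing inequality: if a group acts on a metric measure space by
measure-preserving isometries with `2ε`-separated orbit of `q₀`, then for a finite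
set `F ⊆ G` whose elements move `q₀` at most `R`, one has
`(card F) * μ(B̄(q₀,ε)) ≤ μ(B̄(q₀, R+ε))`. -/
theorem separated_orbit_volume_bound {G X : Type*} [Group G] [MetricSpace X]
    [MeasurableSpace X] [BorelSpace X] (μ : Measure X)
    (φ : G →* (X ≃ᵢ X))
    (hμ : ∀ g : G, ∀ S : Set X, MeasurableSet S → μ ((φ g) ⁻¹' S) = μ S)
    (q₀ : X) (ε : ℝ) (hε : 0 < ε)
    (hsep : ∀ γ : G, γ ≠ 1 → 2 * ε < dist (φ γ q₀) q₀)
    (F : Finset G) (R : ℝ) (hR : 0 ≤ R)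
    (hF : ∀ γ ∈ F, dist (φ γ q₀) q₀ ≤ R) :
    (F.card : ENNReal) * μ (Metric.closedBall q₀ ε) ≤
      μ (Metric.closedBall q₀ (R + ε)) := by
  -- key distance computation
  have hdist : ∀ a b : G, dist (φ a q₀) (φ b q₀) = dist (φ (b⁻¹ * a) q₀) q₀ := by
    intro a b
    have h1 : φ (b⁻¹ * a) q₀ = φ b⁻¹ (φ a q₀) := by
      rw [map_mul]; rfl
    have h2 : φ b⁻¹ (φ b q₀) = q₀ := by
      have : φ b⁻¹ (φ b q₀) = φ (b⁻¹ * b) q₀ := by rw [map_mul]; rfl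
      rw [this, inv_mul_cancel, map_one]; rfl
    calc dist (φ a q₀) (φ b q₀) = dist (φ b⁻¹ (φ a q₀)) (φ b⁻¹ (φ b q₀)) :=
          ((φ b⁻¹).isometry.dist_eq _ _).symm
      _ = dist (φ (b⁻¹ * a) q₀) q₀ := by rw [h1, h2]
  have hball : ∀ γ : G, μ (Metric.closedBall (φ γ q₀) ε) = μ (Metric.closedBall q₀ ε) := by
    intro γ
    have h := hμ γ (Metric.closedBall (φ γ q₀) ε) measurableSet_closedBall
    rw [← h]
    congr 1
    ext x
    simp [Metric.mem_closedBall, (φ γ).isometry.dist_eq]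
  have hdisj : (F : Set G).PairwiseDisjoint (fun γ => Metric.closedBall (φ γ q₀) ε) := by
    intro a _ b _ hab
    apply Metric.closedBall_disjoint_closedBall
    have hne : b⁻¹ * a ≠ 1 := by
      intro h
      exact hab (by rwa [inv_mul_eq_one, eq_comm] at h)
    have := hsep _ hne
    rw [hdist a b]
    linarith
  have hsub : (⋃ γ ∈ F, Metric.closedBall (φ γ q₀) ε) ⊆ Metric.closedBall q₀ (R + ε) := by
    intro x hx
    simp only [Set.mem_iUnion, Metric.mem_closedBall] at hx ⊢
    obtain ⟨γ, hγF, hxd⟩ := hx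
    have := hF γ hγF
    calc dist x q₀ ≤ dist x (φ γ q₀) + dist (φ γ q₀) q₀ := dist_triangle _ _ _
      _ ≤ R + ε := by linarith
  calc (F.card : ENNReal) * μ (Metric.closedBall q₀ ε)
      = ∑ γ ∈ F, μ (Metric.closedBall (φ γ q₀) ε) := by
        rw [Finset.sum_congr rfl fun γ _ => hball γ, Finset.sum_const, nsmul_eq_mul]
    _ = μ (⋃ γ ∈ F, Metric.closedBall (φ γ q₀) ε) :=
        (measure_biUnion_finset hdisj fun γ _ => measurableSet_closedBall).symm
    _ ≤ μ (Metric.closedBall q₀ (R + ε)) := measure_mono hsub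
end

section
/- Let (X,d) be a metric space equipped with a Borel measure μ, and let φ be a group homomorphism from the free group on two generators to the group of isometric bijections of X, such that every isometry in the image of φ preserves μ. Let a and b denote the isometries that are the images under φ of the two free generators. Let q₀ ∈ X and ε > 0 be such that d(φ(w)(q₀), q₀) > 2ε for every w ≠ 1 in the free group, and set C := max(d(a(q₀), q₀), d(b(q₀), q₀)). Then for every natural number n, 3^n · μ(B̄(q₀, ε)) ≤ μ(B̄(q₀, n·C + ε)). -/
open MeasureTheory

namespace FreeVolumeGrowth

/-- Given a previous letter `ℓ`, the three letters that can follow it without cancellation. -/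
def nextLetter (ℓ : Fin 2 × Bool) : Fin 3 → Fin 2 × Bool
  | 0 => ℓ
  | 1 => (if ℓ.1 = 0 then 1 else 0, false)
  | 2 => (if ℓ.1 = 0 then 1 else 0, true)

lemma nextLetter_injective (ℓ : Fin 2 × Bool) : Function.Injective (nextLetter ℓ) := by
  intro i j h
  revert h; revert i j; revert ℓ; decide

lemma nextLetter_ok (ℓ : Fin 2 × Bool) (i : Fin 3) :
    ¬ (ℓ.1 = (nextLetter ℓ i).1 ∧ ℓ.2 = !(nextLetter ℓ i).2) := by
  revert i; revert ℓ; decide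

/-- Build a reduced word from a sequence of choices. -/
def buildWord (ℓ : Fin 2 × Bool) : List (Fin 3) → List (Fin 2 × Bool)
  | [] => []
  | i :: t => nextLetter ℓ i :: buildWord (nextLetter ℓ i) t

lemma buildWord_length (ℓ : Fin 2 × Bool) (s : List (Fin 3)) :
    (buildWord ℓ s).length = s.length := by
  induction s generalizing ℓ with
  | nil => rfl
  | cons i t ih => simp [buildWord, ih]

lemma buildWord_chain (ℓ : Fin 2 × Bool) (s : List (Fin 3)) :
    List.Chain (fun p q : Fin 2 × Bool => ¬ (p.1 = q.1 ∧ p.2 = !q.2)) ℓ (buildWord ℓ s) := by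
  induction s generalizing ℓ with
  | nil => exact List.Chain.nil
  | cons i t ih => exact List.Chain.cons (nextLetter_ok ℓ i) (ih _)

lemma buildWord_chain' (ℓ : Fin 2 × Bool) (s : List (Fin 3)) :
    List.Chain' (fun p q : Fin 2 × Bool => ¬ (p.1 = q.1 ∧ p.2 = !q.2)) (buildWord ℓ s) := by
  induction s generalizing ℓ with
  | nil => exact List.isChain_nil
  | cons i t ih =>
    refine List.isChain_cons.2 ⟨?_, ih _⟩
    intro y hy
    cases t with
    | nil => simp [buildWord] at hy
    | cons j u =>
      simp only [buildWord, List.head?_cons, Option.mem_def, Option.some.injEq] at hy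
      rw [← hy]
      exact nextLetter_ok _ _

lemma buildWord_injective (ℓ : Fin 2 × Bool) :
    ∀ s t : List (Fin 3), buildWord ℓ s = buildWord ℓ t → s = t := by
  intro s
  induction s generalizing ℓ with
  | nil =>
    intro t h
    cases t with
    | nil => rfl
    | cons j u => simp [buildWord] at h
  | cons i s ih =>
    intro t h
    cases t with
    | nil => simp [buildWord] at h
    | cons j u =>
      simp only [buildWord, List.cons.injEq] at h
      obtain ⟨h1, h2⟩ := h
      have hij : i = j := nextLetter_injective ℓ h1
      subst hij
      exact congrArg (i :: ·) (ih _ _ h2)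

lemma reduce_of_chain : ∀ (L : List (Fin 2 × Bool)),
    List.Chain' (fun p q : Fin 2 × Bool => ¬ (p.1 = q.1 ∧ p.2 = !q.2)) L →
    FreeGroup.reduce L = L := by
  intro L
  induction L with
  | nil => intro _; rfl
  | cons x t ih =>
    intro hc
    have ht := hc.tail
    have hred : FreeGroup.reduce t = t := ih ht
    rw [FreeGroup.reduce.cons, hred]
    cases t with
    | nil => rfl
    | cons hd tl =>
      have hx : ¬ (x.1 = hd.1 ∧ x.2 = !hd.2) := List.isChain_cons_cons.1 hc |>.1
      simp only [hx, if_false]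

/-- The word associated to a choice sequence. -/
def wordOf (s : List (Fin 3)) : FreeGroup (Fin 2) :=
  FreeGroup.mk (buildWord (0, true) s)

lemma wordOf_injective : Function.Injective wordOf := by
  intro s t h
  have h2 : FreeGroup.reduce (buildWord (0, true) s) =
      FreeGroup.reduce (buildWord (0, true) t) := by
    have := congrArg FreeGroup.toWord h
    simpa [wordOf, FreeGroup.toWord_mk] using this
  rw [reduce_of_chain _ (buildWord_chain' _ s),
      reduce_of_chain _ (buildWord_chain' _ t)] at h2
  exact buildWord_injective _ s t h2

end FreeVolumeGrowth

open FreeVolumeGrowth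

/-- Exponential volume growth: if the free group of rank 2 acts on a metric
measure space by measure-preserving isometries with `2ε`-separated orbit of `q₀`,
and `C` is the maximal displacement of `q₀` under the two generators, then
`3^n · μ(B̄(q₀,ε)) ≤ μ(B̄(q₀, n·C + ε))` for every `n`. -/
theorem free_action_exponential_volume_growth {X : Type*} [MetricSpace X]
    [MeasurableSpace X] [BorelSpace X] (μ : Measure X)
    (φ : FreeGroup (Fin 2) →* (X ≃ᵢ X))
    (hμ : ∀ w : FreeGroup (Fin 2), ∀ S : Set X, MeasurableSet S →
      μ ((φ w) ⁻¹' S) = μ S)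
    (q₀ : X) (ε : ℝ) (hε : 0 < ε)
    (hsep : ∀ w : FreeGroup (Fin 2), w ≠ 1 → 2 * ε < dist (φ w q₀) q₀)
    (C : ℝ)
    (hC : C = max (dist (φ (FreeGroup.of 0) q₀) q₀) (dist (φ (FreeGroup.of 1) q₀) q₀))
    (n : ℕ) :
    (3 : ENNReal) ^ n * μ (Metric.closedBall q₀ ε) ≤
      μ (Metric.closedBall q₀ (n * C + ε)) := by
  -- basic displacement lemmas
  have hdist_mul : ∀ g h : FreeGroup (Fin 2),
      dist (φ (g * h) q₀) q₀ ≤ dist (φ g q₀) q₀ + dist (φ h q₀) q₀ := by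
    intro g h
    have : dist (φ (g * h) q₀) (φ g q₀) = dist (φ h q₀) q₀ := by
      rw [map_mul]
      exact (φ g).isometry.dist_eq _ _
    calc dist (φ (g * h) q₀) q₀ ≤ dist (φ (g * h) q₀) (φ g q₀) + dist (φ g q₀) q₀ :=
          dist_triangle _ _ _
      _ = dist (φ h q₀) q₀ + dist (φ g q₀) q₀ := by rw [this]
      _ = dist (φ g q₀) q₀ + dist (φ h q₀) q₀ := by ring
  have hdist_inv : ∀ g : FreeGroup (Fin 2), dist (φ g⁻¹ q₀) q₀ = dist (φ g q₀) q₀ := by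
    intro g
    have : dist (φ g (φ g⁻¹ q₀)) (φ g q₀) = dist (φ g⁻¹ q₀) q₀ := (φ g).isometry.dist_eq _ _
    have h1 : φ g (φ g⁻¹ q₀) = q₀ := by
      have : φ g * φ g⁻¹ = 1 := by rw [← map_mul, mul_inv_cancel, map_one]
      calc φ g (φ g⁻¹ q₀) = (φ g * φ g⁻¹) q₀ := rfl
        _ = q₀ := by rw [this]; rfl
    rw [h1] at this
    rw [← this, dist_comm]
  have hletter : ∀ ℓ : Fin 2 × Bool, dist (φ (FreeGroup.mk [ℓ]) q₀) q₀ ≤ C := by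
    rintro ⟨a, bb⟩
    have hof : ∀ a : Fin 2, dist (φ (FreeGroup.of a) q₀) q₀ ≤ C := by
      intro a
      fin_cases a
      · rw [hC]; exact le_max_left _ _
      · rw [hC]; exact le_max_right _ _
    cases bb with
    | true => exact hof a
    | false =>
      have : FreeGroup.mk [(a, false)] = (FreeGroup.of a)⁻¹ := by
        show _ = (FreeGroup.mk [(a, true)])⁻¹
        rw [FreeGroup.inv_mk]
        simp [FreeGroup.invRev]
      rw [this, hdist_inv]
      exact hof a
  have hC0 : 0 ≤ C := le_trans dist_nonneg (by rw [hC]; exact le_max_left _ _)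
  -- displacement bound for built words
  have hdisp : ∀ s : List (Fin 3), dist (φ (wordOf s) q₀) q₀ ≤ s.length * C := by
    have key : ∀ (s : List (Fin 3)) (ℓ : Fin 2 × Bool),
        dist (φ (FreeGroup.mk (buildWord ℓ s)) q₀) q₀ ≤ s.length * C := by
      intro s
      induction s with
      | nil =>
        intro ℓ
        simp only [buildWord, List.length_nil, Nat.cast_zero, zero_mul]
        have : FreeGroup.mk ([] : List (Fin 2 × Bool)) = 1 := rfl
        rw [this, map_one]
        simp
      | cons i t ih =>
        intro ℓ
        have hm : FreeGroup.mk (buildWord ℓ (i :: t)) =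
            FreeGroup.mk [nextLetter ℓ i] * FreeGroup.mk (buildWord (nextLetter ℓ i) t) := by
          rw [FreeGroup.mul_mk]; rfl
        calc dist (φ (FreeGroup.mk (buildWord ℓ (i :: t))) q₀) q₀
            ≤ dist (φ (FreeGroup.mk [nextLetter ℓ i]) q₀) q₀ +
              dist (φ (FreeGroup.mk (buildWord (nextLetter ℓ i) t)) q₀) q₀ := by
              rw [hm]; exact hdist_mul _ _
          _ ≤ C + t.length * C := add_le_add (hletter _) (ih _)
          _ = (i :: t).length * C := by simp [List.length_cons]; ring
    intro s; exact key s _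
  -- the family of balls
  set W : (Fin n → Fin 3) → FreeGroup (Fin 2) := fun s => wordOf (List.ofFn s) with hW
  have hWinj : Function.Injective W := by
    intro s t h
    have := wordOf_injective h
    exact funext fun i => by
      have := List.ofFn_injective this
      exact congrFun this i
  set B : (Fin n → Fin 3) → Set X := fun s => Metric.closedBall (φ (W s) q₀) ε with hB
  have hBmeas : ∀ s, MeasurableSet (B s) := fun s => measurableSet_closedBall
  have hBμ : ∀ s, μ (B s) = μ (Metric.closedBall q₀ ε) := by
    intro s
    have : (φ (W s)) ⁻¹' (B s) = Metric.closedBall q₀ ε := by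
      ext x
      simp only [hB, Set.mem_preimage, Metric.mem_closedBall]
      rw [(φ (W s)).isometry.dist_eq]
    rw [← this, hμ _ _ (hBmeas s)]
  have hBdisj : Pairwise (Function.onFun Disjoint B) := by
    intro s t hst
    rw [Function.onFun, Set.disjoint_left]
    intro x hxs hxt
    have hne : (W t)⁻¹ * W s ≠ 1 := by
      intro h
      exact hst ((hWinj (inv_mul_eq_one.1 h)).symm)
    have hd : dist (φ (W s) q₀) (φ (W t) q₀) = dist (φ ((W t)⁻¹ * W s) q₀) q₀ := by
      rw [map_mul, map_inv]
      have : (φ (W t))⁻¹ (φ (W t) q₀) = q₀ := (φ (W t)).symm_apply_apply q₀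
      calc dist (φ (W s) q₀) (φ (W t) q₀)
          = dist ((φ (W t))⁻¹ (φ (W s) q₀)) ((φ (W t))⁻¹ (φ (W t) q₀)) := by
            rw [((φ (W t))⁻¹ : X ≃ᵢ X).isometry.dist_eq]
        _ = dist (((φ (W t))⁻¹ * φ (W s)) q₀) q₀ := by rw [this]; rfl
    have h2e : 2 * ε < dist (φ (W s) q₀) (φ (W t) q₀) := by
      rw [hd]; exact hsep _ hne
    have : dist (φ (W s) q₀) (φ (W t) q₀) ≤ 2 * ε := by
      calc dist (φ (W s) q₀) (φ (W t) q₀)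
          ≤ dist (φ (W s) q₀) x + dist x (φ (W t) q₀) := dist_triangle _ _ _
        _ ≤ ε + ε := add_le_add (by rw [dist_comm]; exact hxs) hxt
        _ = 2 * ε := by ring
    linarith
  have hBsub : ∀ s, B s ⊆ Metric.closedBall q₀ (n * C + ε) := by
    intro s x hx
    rw [Metric.mem_closedBall] at hx ⊢
    have hdw : dist (φ (W s) q₀) q₀ ≤ n * C := by
      have := hdisp (List.ofFn s)
      simpa [List.length_ofFn] using this
    calc dist x q₀ ≤ dist x (φ (W s) q₀) + dist (φ (W s) q₀) q₀ := dist_triangle _ _ _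
      _ ≤ ε + n * C := add_le_add hx hdw
      _ = n * C + ε := by ring
  -- put it together
  have hunion : μ (⋃ s, B s) = ∑' s : (Fin n → Fin 3), μ (B s) :=
    measure_iUnion hBdisj hBmeas
  have hsum : ∑' s : (Fin n → Fin 3), μ (B s) = (3 : ENNReal) ^ n * μ (Metric.closedBall q₀ ε) := by
    rw [tsum_fintype]
    simp only [hBμ]
    rw [Finset.sum_const, Finset.card_univ]
    have : Fintype.card (Fin n → Fin 3) = 3 ^ n := by
      rw [Fintype.card_fun]; simp
    rw [this, nsmul_eq_mul]
    push_cast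
    ring
  calc (3 : ENNReal) ^ n * μ (Metric.closedBall q₀ ε) = ∑' s : (Fin n → Fin 3), μ (B s) :=
        hsum.symm
    _ = μ (⋃ s, B s) := hunion.symm
    _ ≤ μ (Metric.closedBall q₀ (n * C + ε)) := measure_mono (Set.iUnion_subset hBsub)
end

section
/- Let (X,d) be a metric space equipped with a Borel measure μ, let q₀ ∈ X and ε > 0 with μ(B̄(q₀, ε)) > 0, and suppose there exist constants A > 0 and m > 0 such that μ(B̄(q₀, R)) ≤ A · R^m for all R ≥ ε. Then there is no group homomorphism φ from the free group on two generators to the group of isometric bijections of X such that every isometry in the image of φ preserves μ and d(φ(w)(q₀), q₀) > 2ε for every w ≠ 1 in the free group. -/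
open MeasureTheory

private lemma reduce_posWord {α : Type*} [DecidableEq α] (l : List α) :
    FreeGroup.reduce (l.map (fun a => (a, true))) = l.map (fun a => (a, true)) := by
  induction l with
  | nil => simp
  | cons a l ih =>
    rw [List.map_cons, FreeGroup.reduce.cons, ih]
    cases l with
    | nil => simp
    | cons b l => simp

private lemma toWord_posWord {α : Type*} [DecidableEq α] (l : List α) :
    ((l.map FreeGroup.of).prod).toWord = l.map (fun a => (a, true)) := by
  have : (l.map FreeGroup.of).prod = FreeGroup.mk (l.map (fun a => (a, true))) := by
    induction l with
    | nil => simp [FreeGroup.one_eq_mk]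
    | cons a l ih =>
      rw [List.map_cons, List.prod_cons, ih, List.map_cons, FreeGroup.of, FreeGroup.mul_mk,
        List.singleton_append]
  rw [this, FreeGroup.toWord_mk, reduce_posWord]

private lemma posWord_injective {α : Type*} [DecidableEq α] :
    Function.Injective (fun l : List α => (l.map FreeGroup.of).prod) := by
  intro l l' h
  have h2 : l.map (fun a => (a, true)) = l'.map (fun a => (a, true)) := by
    simp only [] at h
    rw [← toWord_posWord l, ← toWord_posWord l', h]
  have : Function.Injective (fun a : α => (a, true)) := fun a b hab => by
    simpa using congrArg Prod.fst hab
  exact List.map_injective_iff.2 this h2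

/-- Polynomial volume growth of balls is incompatible with a `2ε`-separated,
measure-preserving, isometric action of the free group of rank 2. -/
theorem no_free_action_of_polynomial_growth {X : Type*} [MetricSpace X]
    [MeasurableSpace X] [BorelSpace X] (μ : Measure X)
    (q₀ : X) (ε : ℝ) (hε : 0 < ε)
    (hpos : 0 < μ (Metric.closedBall q₀ ε))
    (A m : ℝ) (hA : 0 < A) (hm : 0 < m)
    (hgrowth : ∀ R : ℝ, ε ≤ R →
      μ (Metric.closedBall q₀ R) ≤ ENNReal.ofReal (A * R ^ m)) :
    ¬ ∃ φ : FreeGroup (Fin 2) →* (X ≃ᵢ X),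
      (∀ w : FreeGroup (Fin 2), ∀ S : Set X, MeasurableSet S →
        μ ((φ w) ⁻¹' S) = μ S) ∧
      (∀ w : FreeGroup (Fin 2), w ≠ 1 → 2 * ε < dist (φ w q₀) q₀) := by
  rintro ⟨φ, hpres, hsep⟩
  -- each orbit ball has the same measure
  have hmulapp : ∀ (a b : FreeGroup (Fin 2)) (x : X), φ (a * b) x = φ a (φ b x) := by
    intro a b x; rw [map_mul]; rfl
  have hball : ∀ w : FreeGroup (Fin 2),
      μ (Metric.closedBall (φ w q₀) ε) = μ (Metric.closedBall q₀ ε) := by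
    intro w
    have hpre : (φ w) ⁻¹' (Metric.closedBall (φ w q₀) ε) = Metric.closedBall q₀ ε := by
      ext x
      simp [Metric.mem_closedBall, IsometryEquiv.dist_eq]
    rw [← hpre, hpres w _ measurableSet_closedBall]
  -- separation of distinct orbit points
  have hsep2 : ∀ w w' : FreeGroup (Fin 2), w ≠ w' → 2 * ε < dist (φ w q₀) (φ w' q₀) := by
    intro w w' hne
    have hq : φ w'⁻¹ (φ w' q₀) = q₀ := by
      rw [← hmulapp, inv_mul_cancel, map_one]
      rfl
    have h1 : dist (φ (w'⁻¹ * w) q₀) q₀ = dist (φ w q₀) (φ w' q₀) := by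
      calc dist (φ (w'⁻¹ * w) q₀) q₀
          = dist (φ w'⁻¹ (φ w q₀)) (φ w'⁻¹ (φ w' q₀)) := by rw [hmulapp, hq]
        _ = dist (φ w q₀) (φ w' q₀) := IsometryEquiv.dist_eq _ _ _
    rw [← h1]
    exact hsep _ (fun h => hne ((inv_mul_eq_one.mp h).symm))
  -- displacement bound
  set L : ℝ := max (dist (φ (FreeGroup.of 0) q₀) q₀) (dist (φ (FreeGroup.of 1) q₀) q₀) with hLdef
  have hL0 : 0 ≤ L := le_trans dist_nonneg (le_max_left _ _)
  have hLi : ∀ i : Fin 2, dist (φ (FreeGroup.of i) q₀) q₀ ≤ L := by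
    intro i
    fin_cases i
    · exact le_max_left _ _
    · exact le_max_right _ _
  have hdisp : ∀ l : List (Fin 2),
      dist (φ ((l.map FreeGroup.of).prod) q₀) q₀ ≤ l.length * L := by
    intro l
    induction l with
    | nil => simp
    | cons a l ih =>
      have hrw : φ (((a :: l).map FreeGroup.of).prod) q₀
          = φ (FreeGroup.of a) (φ ((l.map FreeGroup.of).prod) q₀) := by
        rw [List.map_cons, List.prod_cons, hmulapp]
      rw [hrw]
      calc dist (φ (FreeGroup.of a) (φ ((l.map FreeGroup.of).prod) q₀)) q₀
          ≤ dist (φ (FreeGroup.of a) (φ ((l.map FreeGroup.of).prod) q₀))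
              (φ (FreeGroup.of a) q₀) + dist (φ (FreeGroup.of a) q₀) q₀ := dist_triangle _ _ _
        _ = dist (φ ((l.map FreeGroup.of).prod) q₀) q₀ + dist (φ (FreeGroup.of a) q₀) q₀ := by
            rw [IsometryEquiv.dist_eq]
        _ ≤ l.length * L + L := add_le_add ih (hLi a)
        _ = (a :: l).length * L := by simp [List.length_cons]; ring
  -- measure quantities
  set v : ENNReal := μ (Metric.closedBall q₀ ε) with hvdef
  have hvfin : v ≠ ⊤ :=
    (lt_of_le_of_lt (hgrowth ε le_rfl) ENNReal.ofReal_lt_top).ne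
  have hv' : 0 < v.toReal := ENNReal.toReal_pos hpos.ne' hvfin
  -- key growth inequality
  have key : ∀ n : ℕ, (2:ℝ)^n * v.toReal ≤ A * ((n:ℝ) * L + ε) ^ m := by
    intro n
    set g : (Fin n → Fin 2) → FreeGroup (Fin 2) :=
      fun t => ((List.ofFn t).map FreeGroup.of).prod with hgdef
    have hginj : Function.Injective g :=
      posWord_injective.comp List.ofFn_injective
    set F : Finset (FreeGroup (Fin 2)) := Finset.univ.image g with hFdef
    have hcard : F.card = 2 ^ n := by
      rw [hFdef, Finset.card_image_of_injective _ hginj, Finset.card_univ]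
      simp
    have hdisj : (↑F : Set (FreeGroup (Fin 2))).PairwiseDisjoint
        (fun w => Metric.closedBall (φ w q₀) ε) := by
      intro w _ w' _ hne
      rw [Function.onFun, Set.disjoint_left]
      intro x hx hx'
      rw [Metric.mem_closedBall] at hx hx'
      have : dist (φ w q₀) (φ w' q₀) ≤ 2 * ε := by
        calc dist (φ w q₀) (φ w' q₀) ≤ dist (φ w q₀) x + dist x (φ w' q₀) := dist_triangle _ _ _
          _ ≤ ε + ε := add_le_add (by rw [dist_comm]; exact hx) hx'
          _ = 2 * ε := by ring
      exact absurd this (not_le.2 (hsep2 w w' hne))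
    have hsum : μ (⋃ w ∈ F, Metric.closedBall (φ w q₀) ε) = (2^n : ℕ) * v := by
      rw [measure_biUnion_finset hdisj (fun w _ => measurableSet_closedBall)]
      rw [Finset.sum_congr rfl (fun w _ => hball w), Finset.sum_const, hcard, nsmul_eq_mul]
    have hsub : (⋃ w ∈ F, Metric.closedBall (φ w q₀) ε)
        ⊆ Metric.closedBall q₀ ((n:ℝ) * L + ε) := by
      intro x hx
      simp only [Set.mem_iUnion] at hx
      obtain ⟨w, hwF, hx⟩ := hx
      rw [hFdef, Finset.mem_image] at hwF
      obtain ⟨t, _, ht⟩ := hwF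
      have hd : dist (φ w q₀) q₀ ≤ (n:ℝ) * L := by
        rw [← ht]
        have h' := hdisp (List.ofFn t)
        rwa [List.length_ofFn] at h'
      rw [Metric.mem_closedBall] at hx ⊢
      calc dist x q₀ ≤ dist x (φ w q₀) + dist (φ w q₀) q₀ := dist_triangle _ _ _
        _ ≤ ε + (n:ℝ) * L := add_le_add hx hd
        _ = (n:ℝ) * L + ε := by ring
    have hεR : ε ≤ (n:ℝ) * L + ε := le_add_of_nonneg_left (by positivity)
    have hchain : ((2:ℕ)^n : ENNReal) * v ≤ ENNReal.ofReal (A * ((n:ℝ) * L + ε) ^ m) := by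
      calc ((2:ℕ)^n : ENNReal) * v = μ (⋃ w ∈ F, Metric.closedBall (φ w q₀) ε) := by
            rw [hsum]; norm_cast
        _ ≤ μ (Metric.closedBall q₀ ((n:ℝ) * L + ε)) := measure_mono hsub
        _ ≤ ENNReal.ofReal (A * ((n:ℝ) * L + ε) ^ m) := hgrowth _ hεR
    have hR0 : (0:ℝ) < (n:ℝ) * L + ε := lt_of_lt_of_le hε hεR
    have hRHS0 : (0:ℝ) ≤ A * ((n:ℝ) * L + ε) ^ m := by positivity
    have hfin := ENNReal.toReal_le_of_le_ofReal hRHS0 hchain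
    rw [ENNReal.toReal_mul] at hfin
    have h2' : (((2:ℕ)^n : ENNReal)).toReal = (2:ℝ)^n := by
      rw [ENNReal.toReal_pow]
      norm_num
    rwa [h2'] at hfin
  -- deduce a polynomial bound on 2^n and contradict
  set B : ℝ := max L ε with hBdef
  have hB0 : 0 < B := lt_of_lt_of_le hε (le_max_right _ _)
  set k : ℕ := ⌈m⌉₊ with hkdef
  set D : ℝ := A * B ^ m * 2 ^ k / v.toReal with hDdef
  have hD0 : 0 < D := by positivity
  have key2 : ∀ n : ℕ, 1 ≤ n → (2:ℝ)^n ≤ D * (n:ℝ)^k := by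
    intro n hn
    have hn1 : (1:ℝ) ≤ (n:ℝ) := by exact_mod_cast hn
    have h1 : ((n:ℝ) * L + ε) ^ m ≤ (((n:ℝ) + 1) * B) ^ m := by
      apply Real.rpow_le_rpow (by positivity) _ hm.le
      have : (n:ℝ) * L ≤ (n:ℝ) * B := by
        apply mul_le_mul_of_nonneg_left (le_max_left _ _) (by positivity)
      nlinarith [le_max_right L ε]
    have h2 : (((n:ℝ) + 1) * B) ^ m = ((n:ℝ) + 1) ^ m * B ^ m :=
      Real.mul_rpow (by positivity) hB0.le
    have h3 : ((n:ℝ) + 1) ^ m ≤ ((n:ℝ) + 1) ^ k := by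
      rw [← Real.rpow_natCast ((n:ℝ) + 1) k]
      exact Real.rpow_le_rpow_of_exponent_le (by linarith) (Nat.le_ceil m)
    have h5 : ((n:ℝ) + 1) ^ k ≤ (2 * (n:ℝ)) ^ k := by
      apply pow_le_pow_left₀ (by positivity) (by linarith)
    have h6 : (2 * (n:ℝ)) ^ k = 2 ^ k * (n:ℝ) ^ k := mul_pow _ _ _
    have hk := key n
    have hBm : (0:ℝ) < B ^ m := Real.rpow_pos_of_pos hB0 m
    have : (2:ℝ)^n * v.toReal ≤ A * B ^ m * 2 ^ k * (n:ℝ)^k := by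
      calc (2:ℝ)^n * v.toReal ≤ A * ((n:ℝ) * L + ε) ^ m := hk
        _ ≤ A * (((n:ℝ) + 1) ^ k * B ^ m) := by
            calc A * ((n:ℝ) * L + ε) ^ m ≤ A * ((((n:ℝ) + 1) * B) ^ m) :=
                  mul_le_mul_of_nonneg_left h1 hA.le
              _ = A * (((n:ℝ) + 1) ^ m * B ^ m) := by rw [h2]
              _ ≤ A * (((n:ℝ) + 1) ^ k * B ^ m) :=
                  mul_le_mul_of_nonneg_left
                    (mul_le_mul_of_nonneg_right h3 hBm.le) hA.le
        _ ≤ A * (2 ^ k * (n:ℝ)^k * B ^ m) := by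
            apply mul_le_mul_of_nonneg_left _ hA.le
            apply mul_le_mul_of_nonneg_right _ hBm.le
            rw [← h6]; exact h5
        _ = A * B ^ m * 2 ^ k * (n:ℝ)^k := by ring
    rw [hDdef, div_mul_eq_mul_div, le_div_iff₀ hv']
    linarith
  -- contradiction with exponential growth
  have htend := tendsto_pow_const_div_const_pow_of_one_lt k (show (1:ℝ) < 2 by norm_num)
  have hev : ∀ᶠ n : ℕ in Filter.atTop, (n:ℝ)^k / 2^n < 1 / D :=
    htend.eventually (gt_mem_nhds (by positivity))
  obtain ⟨n, hn1, hnlt⟩ := (Filter.eventually_ge_atTop 1).and hev |>.exists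
  have h2n : (0:ℝ) < 2^n := by positivity
  have : (n:ℝ)^k * D < 2^n := by
    rw [div_lt_div_iff₀ h2n hD0] at hnlt
    linarith
  have := lt_of_le_of_lt (key2 n hn1) (by linarith : D * (n:ℝ)^k < 2^n)
  exact lt_irrefl _ this
end

section
/- For every integer n ≥ 1 and every ε > 0, there exists a continuous map f from the Euclidean space ℝⁿ to the unit sphere Sⁿ (the unit sphere centered at the origin in ℝ^{n+1}) such that f is surjective, f is Lipschitz with Lipschitz constant at most ε, and f is constant outside some compact subset of ℝⁿ. -/
/-!
Identify `ℝⁿ` with the hyperplane `e⊥` orthogonal to a unit vector `e` of `ℝⁿ⁺¹` and wrap it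
around the sphere by the exponential map of the sphere at `e`, cut off at radius `π`:
`x ↦ cos ‖x‖ • e + sin ‖x‖ • (x / ‖x‖)` for `‖x‖ ≤ π`, and `-e` beyond. This map is onto,
constant outside the ball of radius `π`, and Lipschitz (a crude estimate gives the constant 4),
so precomposing it with a small enough dilation gives an `ε`-contraction.
-/

open Real Metric

section Normed

variable {E : Type*} [NormedAddCommGroup E] [NormedSpace ℝ E]

theorem norm_mul_norm_inv_smul_sub_le (x y : E) :
    ‖y‖ * ‖‖x‖⁻¹ • x - ‖y‖⁻¹ • y‖ ≤ 2 * ‖x - y‖ := by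
  have hy : ‖y‖ • ‖y‖⁻¹ • y = y := by
    rcases eq_or_ne y 0 with rfl | hy
    · simp
    · exact smul_inv_smul₀ (norm_ne_zero_iff.mpr hy) y
  have hsplit : ‖y‖ • (‖x‖⁻¹ • x - ‖y‖⁻¹ • y) = (x - y) + (‖y‖ * ‖x‖⁻¹ - 1) • x := by
    rw [smul_sub, hy, smul_smul, sub_smul, one_smul]; abel
  have hrad : ‖(‖y‖ * ‖x‖⁻¹ - 1) • x‖ ≤ ‖x - y‖ := by
    rcases eq_or_ne x 0 with rfl | hx
    · simp
    have hmul : (‖y‖ * ‖x‖⁻¹ - 1) * ‖x‖ = ‖y‖ - ‖x‖ := by field_simp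
    rw [norm_smul, Real.norm_eq_abs, ← abs_norm x, ← abs_mul, abs_norm, hmul]
    exact (abs_norm_sub_norm_le y x).trans (norm_sub_rev y x).le
  calc ‖y‖ * ‖‖x‖⁻¹ • x - ‖y‖⁻¹ • y‖ = ‖(x - y) + (‖y‖ * ‖x‖⁻¹ - 1) • x‖ := by
        rw [← hsplit, norm_smul, Real.norm_eq_abs, abs_norm]
    _ ≤ ‖x - y‖ + ‖x - y‖ := (norm_add_le _ _).trans (add_le_add_right hrad _)
    _ = 2 * ‖x - y‖ := by ring

theorem lipschitzWith_radial {φ : ℝ → ℝ} (hφ : LipschitzWith 1 φ)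
    (hφ_le : ∀ t, 0 ≤ t → |φ t| ≤ t) :
    LipschitzWith 3 fun x : E ↦ φ ‖x‖ • ‖x‖⁻¹ • x := by
  refine LipschitzWith.of_dist_le_mul fun x y ↦ ?_
  have hsplit : φ ‖x‖ • ‖x‖⁻¹ • x - φ ‖y‖ • ‖y‖⁻¹ • y
      = (φ ‖x‖ - φ ‖y‖) • ‖x‖⁻¹ • x + φ ‖y‖ • (‖x‖⁻¹ • x - ‖y‖⁻¹ • y) := by
    rw [sub_smul, smul_sub]; abel
  have hφxy : |φ ‖x‖ - φ ‖y‖| ≤ ‖x - y‖ := by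
    simpa [Real.dist_eq, dist_eq_norm] using (hφ.comp lipschitzWith_one_norm).dist_le_mul x y
  have hunit : ‖‖x‖⁻¹ • x‖ ≤ 1 := by simpa using inv_norm_smul_mem_unitClosedBall x
  rw [dist_eq_norm, dist_eq_norm, hsplit, NNReal.coe_ofNat]
  calc _ ≤ |φ ‖x‖ - φ ‖y‖| * ‖‖x‖⁻¹ • x‖ + |φ ‖y‖| * ‖‖x‖⁻¹ • x - ‖y‖⁻¹ • y‖ := by
        simpa only [norm_smul, Real.norm_eq_abs] using
          norm_add_le ((φ ‖x‖ - φ ‖y‖) • ‖x‖⁻¹ • x) (φ ‖y‖ • (‖x‖⁻¹ • x - ‖y‖⁻¹ • y))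
    _ ≤ ‖x - y‖ * 1 + ‖y‖ * ‖‖x‖⁻¹ • x - ‖y‖⁻¹ • y‖ := by
        gcongr
        exact hφ_le _ (norm_nonneg y)
    _ ≤ ‖x - y‖ * 1 + 2 * ‖x - y‖ := by grw [norm_mul_norm_inv_smul_sub_le x y]
    _ = 3 * ‖x - y‖ := by ring

theorem exists_norm_eq_one_and_norm_smul_eq [Nontrivial E] (w : E) :
    ∃ d : E, ‖d‖ = 1 ∧ ‖w‖ • d = w := by
  rcases eq_or_ne w 0 with rfl | hw
  · obtain ⟨d, hd⟩ := exists_norm_eq E zero_le_one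
    exact ⟨d, hd, by simp⟩
  · exact ⟨‖w‖⁻¹ • w, norm_smul_inv_norm hw, smul_inv_smul₀ (norm_ne_zero_iff.mpr hw) w⟩

/-- On vectors orthogonal to the unit vector `e`: the exponential map of the unit sphere at `e`,
with every point at distance at least `π` sent to the antipode `-e`. -/
noncomputable def truncatedSphereExp (e x : E) : E :=
  cos (min ‖x‖ π) • e + sin (min ‖x‖ π) • ‖x‖⁻¹ • x

theorem lipschitzWith_truncatedSphereExp {e : E} (he : ‖e‖ = 1) :
    LipschitzWith 4 (truncatedSphereExp e) := by
  have hθ : LipschitzWith 1 fun t : ℝ ↦ min t π := LipschitzWith.id.min_const π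
  have hcos : LipschitzWith 1 fun x : E ↦ cos (min ‖x‖ π) • e := by
    refine LipschitzWith.of_dist_le_mul fun x y ↦ ?_
    rw [dist_eq_norm, ← sub_smul, norm_smul, he, mul_one, ← dist_eq_norm]
    simpa using ((lipschitzWith_cos.comp hθ).comp lipschitzWith_one_norm).dist_le_mul x y
  have hsin : LipschitzWith 3 fun x : E ↦ sin (min ‖x‖ π) • ‖x‖⁻¹ • x :=
    lipschitzWith_radial (φ := fun t ↦ sin (min t π))
      (by simpa [Function.comp_def] using lipschitzWith_sin.comp hθ)
      fun t ht ↦ abs_sin_le_abs.trans <| by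
        rw [abs_of_nonneg (le_min ht pi_nonneg)]; exact min_le_left t π
  have h := hcos.add hsin
  rwa [show (1 + 3 : NNReal) = 4 by norm_num] at h

theorem truncatedSphereExp_of_pi_le (e : E) {x : E} (hx : π ≤ ‖x‖) :
    truncatedSphereExp e x = -e := by
  simp [truncatedSphereExp, min_eq_right hx]

theorem truncatedSphereExp_smul (e : E) {d : E} (hd : ‖d‖ = 1) {t : ℝ} (ht₀ : 0 ≤ t)
    (htπ : t ≤ π) : truncatedSphereExp e (t • d) = cos t • e + sin t • d := by
  have hnorm : ‖t • d‖ = t := by rw [norm_smul_of_nonneg ht₀, hd, mul_one]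
  rcases ht₀.eq_or_lt with rfl | ht
  · simp [truncatedSphereExp, pi_nonneg]
  · rw [truncatedSphereExp, hnorm, min_eq_left htπ, inv_smul_smul₀ ht.ne']

end Normed

section InnerProduct

open scoped RealInnerProductSpace

variable {F : Type*} [NormedAddCommGroup F] [InnerProductSpace ℝ F] {e : F}

theorem norm_truncatedSphereExp (he : ‖e‖ = 1) {x : F} (hx : x ∈ (ℝ ∙ e)ᗮ) :
    ‖truncatedSphereExp e x‖ = 1 := by
  rcases eq_or_ne x 0 with rfl | hx₀
  · simp [truncatedSphereExp, pi_nonneg, he]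
  have horth : ⟪cos (min ‖x‖ π) • e, sin (min ‖x‖ π) • ‖x‖⁻¹ • x⟫ = 0 := by
    rw [Submodule.mem_orthogonal_singleton_iff_inner_right] at hx
    simp [inner_smul_left, inner_smul_right, hx]
  have hsq : ‖truncatedSphereExp e x‖ ^ 2 = 1 := by
    rw [truncatedSphereExp, norm_add_sq_real, horth]
    simp [norm_smul, he, hx₀]
  exact (pow_eq_one_iff_of_nonneg (norm_nonneg _) two_ne_zero).mp hsq

theorem exists_truncatedSphereExp_eq [Nontrivial (ℝ ∙ e)ᗮ] (he : ‖e‖ = 1) {p : F}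
    (hp : ‖p‖ = 1) : ∃ x ∈ (ℝ ∙ e)ᗮ, truncatedSphereExp e x = p := by
  set c := ⟪e, p⟫
  set w := p - c • e
  have hw : w ∈ (ℝ ∙ e)ᗮ := by
    rw [Submodule.mem_orthogonal_singleton_iff_inner_right, inner_sub_right, inner_smul_right,
      real_inner_self_eq_norm_sq, he]
    ring
  have hpyth : c ^ 2 + ‖w‖ ^ 2 = 1 := by
    have h := norm_add_sq_real (c • e) w
    rwa [add_sub_cancel, hp, real_inner_smul_left,
      Submodule.mem_orthogonal_singleton_iff_inner_right.mp hw, norm_smul, he, mul_one,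
      Real.norm_eq_abs, sq_abs, one_pow, mul_zero, mul_zero, add_zero, eq_comm] at h
  have hc : |c| ≤ 1 := by
    simpa [he, hp] using abs_real_inner_le_norm e p
  obtain ⟨d, hd, hwd⟩ := exists_norm_eq_one_and_norm_smul_eq (⟨w, hw⟩ : (ℝ ∙ e)ᗮ)
  refine ⟨arccos c • (d : F), Submodule.smul_mem _ _ d.2, ?_⟩
  rw [truncatedSphereExp_smul e (by simpa using hd) (arccos_nonneg c) (arccos_le_pi c),
    cos_arccos (abs_le.mp hc).1 (abs_le.mp hc).2, sin_arccos,
    show 1 - c ^ 2 = ‖w‖ ^ 2 by linarith, sqrt_sq (norm_nonneg w)]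
  have hwd' := congrArg Subtype.val hwd
  simp only [Submodule.coe_smul, Submodule.coe_norm] at hwd'
  rw [hwd', add_sub_cancel]

noncomputable def hyperplaneToSphere (he : ‖e‖ = 1) (x : (ℝ ∙ e)ᗮ) : sphere (0 : F) 1 :=
  ⟨truncatedSphereExp e x, mem_sphere_zero_iff_norm.mpr (norm_truncatedSphereExp he x.2)⟩

theorem lipschitzWith_hyperplaneToSphere (he : ‖e‖ = 1) :
    LipschitzWith 4 (hyperplaneToSphere he) :=
  fun x y ↦ lipschitzWith_truncatedSphereExp he x y

theorem hyperplaneToSphere_surjective [Nontrivial (ℝ ∙ e)ᗮ] (he : ‖e‖ = 1) :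
    Function.Surjective (hyperplaneToSphere he) := by
  rintro ⟨p, hp⟩
  obtain ⟨x, hx, hxp⟩ := exists_truncatedSphereExp_eq he (mem_sphere_zero_iff_norm.mp hp)
  exact ⟨⟨x, hx⟩, Subtype.ext hxp⟩

theorem hyperplaneToSphere_of_pi_le (he : ‖e‖ = 1) {x : (ℝ ∙ e)ᗮ} (hx : π ≤ ‖x‖) :
    hyperplaneToSphere he x = ⟨-e, by simp [he]⟩ :=
  Subtype.ext (truncatedSphereExp_of_pi_le e hx)

end InnerProduct

theorem exists_contraction_of_lipschitzWith {E X : Type*} [NormedAddCommGroup E]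
    [NormedSpace ℝ E] [ProperSpace E] [PseudoMetricSpace X] {g : E → X} {K : NNReal}
    (hg : LipschitzWith K g) (hg_surj : Function.Surjective g) {R : ℝ} {c : X}
    (hc : ∀ x, R ≤ ‖x‖ → g x = c) {ε : ℝ} (hε : 0 < ε) :
    ∃ f : E → X, Continuous f ∧ Function.Surjective f ∧
      (∀ x y, dist (f x) (f y) ≤ ε * dist x y) ∧
      ∃ (Kc : Set E) (c : X), IsCompact Kc ∧ ∀ x ∉ Kc, f x = c := by
  -- `K + 1` rather than `K` spares the case `K = 0`
  set s := ε / (K + 1)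
  have hs : 0 < s := by positivity
  refine ⟨fun x ↦ g (s • x), hg.continuous.comp (continuous_const_smul s),
    fun p ↦ ?_, fun x y ↦ ?_, closedBall 0 (R / s), c, isCompact_closedBall 0 _, fun x hx ↦ ?_⟩
  · obtain ⟨x, rfl⟩ := hg_surj p
    exact ⟨s⁻¹ • x, congrArg g (smul_inv_smul₀ hs.ne' x)⟩
  · calc dist (g (s • x)) (g (s • y)) ≤ K * dist (s • x) (s • y) := hg.dist_le_mul _ _
      _ = K * s * dist x y := by rw [dist_smul₀, Real.norm_of_nonneg hs.le, mul_assoc]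
      _ ≤ ε * dist x y := by
        gcongr
        rw [mul_div_assoc', div_le_iff₀ (by positivity)]
        nlinarith
  · apply hc
    rw [mem_closedBall_zero_iff, not_le, div_lt_iff₀ hs] at hx
    rw [norm_smul_of_nonneg hs.le]
    linarith

/-- Euclidean space is hyperspherical: for every `n ≥ 1` and `ε > 0` there is a
continuous surjection `f : ℝⁿ → Sⁿ` which is an `ε`-contraction and is constant
outside a compact subset of `ℝⁿ`. -/
theorem euclidean_hyperspherical (n : ℕ) (hn : 1 ≤ n) (ε : ℝ) (hε : 0 < ε) :
    ∃ f : EuclideanSpace ℝ (Fin n) →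
        Metric.sphere (0 : EuclideanSpace ℝ (Fin (n + 1))) 1,
      Continuous f ∧ Function.Surjective f ∧
      (∀ x y : EuclideanSpace ℝ (Fin n), dist (f x) (f y) ≤ ε * dist x y) ∧
      ∃ (Kc : Set (EuclideanSpace ℝ (Fin n)))
        (c : Metric.sphere (0 : EuclideanSpace ℝ (Fin (n + 1))) 1),
        IsCompact Kc ∧ ∀ x ∉ Kc, f x = c := by
  let e : EuclideanSpace ℝ (Fin (n + 1)) := EuclideanSpace.single 0 1
  have he : ‖e‖ = 1 := by simp [e]
  have : Fact (Module.finrank ℝ (EuclideanSpace ℝ (Fin (n + 1))) = n + 1) :=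
    ⟨finrank_euclideanSpace_fin⟩
  have hK : Module.finrank ℝ (ℝ ∙ e)ᗮ = n :=
    Submodule.finrank_orthogonal_span_singleton (norm_ne_zero_iff.mp (he ▸ one_ne_zero))
  let ι : EuclideanSpace ℝ (Fin n) ≃ₗᵢ[ℝ] (ℝ ∙ e)ᗮ :=
    ((stdOrthonormalBasis ℝ (ℝ ∙ e)ᗮ).reindex (finCongr hK)).repr.symm
  have : Nontrivial (ℝ ∙ e)ᗮ := Module.nontrivial_of_finrank_pos (hK ▸ hn)
  exact exists_contraction_of_lipschitzWith (R := π)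
    (by simpa using (lipschitzWith_hyperplaneToSphere he).comp ι.lipschitz)
    ((hyperplaneToSphere_surjective he).comp ι.surjective)
    (fun x hx ↦ hyperplaneToSphere_of_pi_le he (ι.norm_map x ▸ hx)) hε
end
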